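/- Let L be the free Lie algebra over a field K on a set X with distinct elements a, b, c, and let f be a polynomial over K such that ⁅Σᵢ (coeff f i) • (ad ι(a))^{2i} (ι(c)), ι(b)⁆ lies in the image of the map x ↦ ⁅x, ι(a)⁆ translated by K·ι(a) (i.e., equals ⁅z, ι(a)⁆ for some z). Then f = 0. -/

import Mathlib

/-!
Send `L` to the free associative algebra `K[FreeMonoid X]` by `ι x ↦ x`. There every word of
`⁅z, a⁆ = z a - a z` begins or ends with `a`, so the word `c a²ⁿ b`, which does neither, has
coefficient `0` on the right. On the left its coefficient is the coefficient of `c a²ⁿ` in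
`Σᵢ fᵢ (ad a)²ⁱ c`, and the coefficient of `c aᵐ` in `(ad a)ᵏ c` is `δₖₘ`; so it is `fₙ`.
-/

attribute [local instance 100] LieRing.ofAssociativeRing

namespace FreeMonoid

variable {α : Type*}

theorem of_mul_ne_of_mul {x y : α} (h : x ≠ y) (u v : FreeMonoid α) : of x * u ≠ of y * v :=
  fun huv => h (List.cons.inj (congrArg toList huv)).1

theorem mul_of_ne_mul_of {x y : α} (h : x ≠ y) (u v : FreeMonoid α) : u * of x ≠ v * of y := by
  intro huv
  simpa [toList_mul, h] using congrArg (fun w => (toList w).getLast?) huv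

end FreeMonoid

theorem LieHom.map_iterate_lie {R L L' : Type*} [CommRing R] [LieRing L] [LieAlgebra R L]
    [LieRing L'] [LieAlgebra R L'] (φ : L →ₗ⁅R⁆ L') (x : L) (n : ℕ) (v : L) :
    φ ((fun w => ⁅w, x⁆)^[n] v) = (fun w => ⁅w, φ x⁆)^[n] (φ v) :=
  (Function.Semiconj.iterate_right (f := φ) (fun w => φ.map_lie w x) n).eq v

namespace MonoidAlgebra

variable {R X : Type*} [CommRing R] {x y : X}

theorem coeff_lie_single_of_eq_zero {v : FreeMonoid X} (hhead : ∀ d, FreeMonoid.of x * d ≠ v)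
    (hlast : ∀ d, d * FreeMonoid.of x ≠ v) (u : MonoidAlgebra R (FreeMonoid X)) (r : R) :
    ⁅u, single (FreeMonoid.of x) r⁆.coeff v = 0 := by
  rw [Ring.lie_def, coeff_sub, Finsupp.sub_apply, coeff_mul_single_of_forall_mul_ne _ _ hlast,
    coeff_single_mul_of_forall_mul_ne _ _ hhead, sub_zero]

theorem coeff_lie_single_of_mul_of (hxy : x ≠ y) (u : MonoidAlgebra R (FreeMonoid X)) (r : R)
    (w : FreeMonoid X) :
    ⁅u, single (FreeMonoid.of y) r⁆.coeff (FreeMonoid.of x * w * FreeMonoid.of y) =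
      u.coeff (FreeMonoid.of x * w) * r := by
  rw [Ring.lie_def, coeff_sub, Finsupp.sub_apply, coeff_mul_single_mul,
    coeff_single_mul_of_forall_mul_ne, sub_zero]
  exact fun d => mul_assoc (FreeMonoid.of x) w _ ▸ FreeMonoid.of_mul_ne_of_mul hxy.symm d _

theorem coeff_iterate_lie_single_of (hxy : x ≠ y) (n m : ℕ) :
    ((fun u => ⁅u, single (FreeMonoid.of x) (1 : R)⁆)^[n] (single (FreeMonoid.of y) 1)).coeff
      (FreeMonoid.of y * FreeMonoid.of x ^ m) = if n = m then 1 else 0 := by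
  induction n generalizing m with
  | zero =>
    rcases m with _ | m
    · simp
    · rw [Function.iterate_zero_apply, coeff_single, Finsupp.single_eq_of_ne,
        if_neg m.succ_ne_zero.symm]
      rw [pow_succ, ← mul_assoc, ← one_mul (FreeMonoid.of y)]
      exact FreeMonoid.mul_of_ne_mul_of hxy _ _
  | succ n ih =>
    rw [Function.iterate_succ_apply']
    rcases m with _ | m
    · rw [if_neg n.succ_ne_zero]
      refine coeff_lie_single_of_eq_zero (fun d => ?_) (fun d => ?_) _ _
      · simpa using FreeMonoid.of_mul_ne_of_mul hxy d 1
      · simpa using FreeMonoid.mul_of_ne_mul_of hxy d 1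
    · rw [pow_succ, ← mul_assoc, coeff_lie_single_of_mul_of hxy.symm, ih]
      simp

end MonoidAlgebra

open MonoidAlgebra in
theorem free_lie_injectivity_step {K : Type*} [Field K] {X : Type*} (a b c : X)
    (hab : a ≠ b) (hac : a ≠ c) (hbc : b ≠ c) (f : Polynomial K)
    (h : ∃ z : FreeLieAlgebra K X,
      ⁅f.sum fun i α =>
          α • (fun w : FreeLieAlgebra K X => ⁅w, FreeLieAlgebra.of K a⁆)^[2 * i]
            (FreeLieAlgebra.of K c), FreeLieAlgebra.of K b⁆ = ⁅z, FreeLieAlgebra.of K a⁆) :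
    f = 0 := by
  obtain ⟨z, hz⟩ := h
  ext n
  let φ := FreeLieAlgebra.lift K fun x : X => single (FreeMonoid.of x) (1 : K)
  have hφ : ∀ x, φ (FreeLieAlgebra.of K x) = single (FreeMonoid.of x) 1 :=
    FreeLieAlgebra.lift_of_apply _
  have key := congrArg
    (fun u => (φ u).coeff (FreeMonoid.of c * FreeMonoid.of a ^ (2 * n) * FreeMonoid.of b)) hz
  simp only [LieHom.map_lie, hφ, Polynomial.sum_def, map_sum, map_smul,
    LieHom.map_iterate_lie] at key
  rw [coeff_lie_single_of_mul_of hbc.symm, coeff_lie_single_of_eq_zero] at key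
  · simpa [coeff_iterate_lie_single_of hac] using key
  · exact fun d => mul_assoc (FreeMonoid.of c) _ _ ▸ FreeMonoid.of_mul_ne_of_mul hac d _
  · exact fun d => FreeMonoid.mul_of_ne_mul_of hab d _
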